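/- arXiv:2107.04423 — 4 statements merged into one kernel-verified Lean document; each statement's English description precedes it below -/
import Mathlib

section
/- Let L(θ, λ) be a Lagrangian of the form L(θ, λ) = f(θ) + Σ_j λ_j g_j(θ), where f(θ) ∈ [0, M²] for all θ, each λ_j ranges over [−C, C], and the constraints are g_j(θ) = 0. Suppose θ* is a feasible point (g_j(θ*) = 0 for all j), and suppose (θ̂, λ̂) is an ε-approximate minimax equilibrium of the game min_θ max_λ L(θ, λ). Then for every j, |g_j(θ̂)| ≤ (M² + 2ε)/C. In particular, setting C = (M² + 2ε)/ε guarantees every constraint is violated by θ̂ by at most ε. -/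
/-- For a Lagrangian `L(θ,λ) = f(θ) + Σ_j λ_j g_j(θ)` with
`f ∈ [0, M²]`, dual variables in `[-C, C]`, a feasible point `θ*`, and an
`ε`-approximate minimax equilibrium `(θ̂, λ̂)`, every constraint value at `θ̂`
satisfies `|g_j(θ̂)| ≤ (M² + 2ε)/C`. -/
theorem stmt5 {Θ : Type*} (d : ℕ) (M C ε : ℝ) (hC : 0 < C) (hε : 0 ≤ ε)
    (f : Θ → ℝ) (g : Fin d → Θ → ℝ)
    (hf : ∀ θ, 0 ≤ f θ ∧ f θ ≤ M ^ 2)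
    (L : Θ → (Fin d → ℝ) → ℝ)
    (hL : ∀ θ lam, L θ lam = f θ + ∑ j, lam j * g j θ)
    (θstar : Θ) (hfeas : ∀ j, g j θstar = 0)
    (θhat : Θ) (lamhat : Fin d → ℝ) (hlam : ∀ j, |lamhat j| ≤ C)
    (heq1 : ∀ θ, L θhat lamhat - L θ lamhat ≤ ε)
    (heq2 : ∀ lam : Fin d → ℝ, (∀ j, |lam j| ≤ C) → L θhat lam - L θhat lamhat ≤ ε) :
    ∀ j, |g j θhat| ≤ (M ^ 2 + 2 * ε) / C := by
  intro j
  set lam : Fin d → ℝ := fun j' => if j' = j then (if 0 ≤ g j θhat then C else -C) else 0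
    with hlamdef
  have hbound : ∀ j', |lam j'| ≤ C := by
    intro j'
    simp only [hlamdef]
    split_ifs <;> simp [abs_of_pos hC, hC.le]
  have hsum : ∑ j', lam j' * g j' θhat = C * |g j θhat| := by
    rw [Finset.sum_eq_single j]
    · simp only [hlamdef, if_pos rfl]
      rcases le_or_gt 0 (g j θhat) with h | h
      · rw [if_pos h, abs_of_nonneg h]
      · rw [if_neg (not_le.mpr h), abs_of_neg h]; ring
    · intro b _ hb; simp [hlamdef, hb]
    · intro h; exact absurd (Finset.mem_univ j) h
  have h2 := heq2 lam hbound
  have h1 := heq1 θstar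
  simp only [hL] at h1 h2
  have hstar : (∑ j', lamhat j' * g j' θstar) = 0 := by
    simp [hfeas]
  rw [hstar] at h1
  rw [hsum] at h2
  have hf1 := (hf θhat).1
  have hf2 := (hf θstar).2
  rw [le_div_iff₀ hC]
  nlinarith [abs_nonneg (g j θhat)]
end

section
/- Let H be a class of binary functions X → {0,1} with VC dimension d_H and F a class of binary functions X → {0,1} with VC dimension d_F. Define the XOR class H ⊕ F = { x ↦ 1[h(x) ≠ f(x)] : h ∈ H, f ∈ F }. Then the VC dimension of H ⊕ F is at most 10 · max{d_H, d_F}. -/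
open Finset

/-- A class of binary functions shatters a finite set if every labeling of the
set is realized by a member of the class. -/
def Shatters {X : Type*} (H : Set (X → Bool)) (S : Finset X) : Prop :=
  ∀ b : X → Bool, ∃ h ∈ H, ∀ x ∈ S, h x = b x

/-- VC dimension of a class of binary functions, as an extended natural number. -/
noncomputable def vcDim {X : Type*} (H : Set (X → Bool)) : ℕ∞ :=
  sSup {n : ℕ∞ | ∃ S : Finset X, (S.card : ℕ∞) = n ∧ Shatters H S}

/-! ### Numeric lemmas -/

lemma step9' {m i : ℕ} (h : 10 * (i + 1) ≤ m + 1) :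
    9 * Nat.choose m i ≤ Nat.choose m (i + 1) := by
  have him : i ≤ m := by omega
  have hpos : 0 < Nat.choose m i := Nat.choose_pos him
  have key := Nat.choose_succ_right_eq m i
  have h2 : 9 * (i + 1) ≤ m - i := by omega
  have : 9 * Nat.choose m i * (i + 1) ≤ Nat.choose m (i + 1) * (i + 1) := by
    calc 9 * Nat.choose m i * (i + 1) = Nat.choose m i * (9 * (i + 1)) := by ring
    _ ≤ Nat.choose m i * (m - i) := Nat.mul_le_mul_left _ h2
    _ = Nat.choose m (i + 1) * (i + 1) := key.symm
  exact Nat.le_of_mul_le_mul_right this (by omega)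

lemma pow9' {m d : ℕ} (j : ℕ) (hj : j ≤ d) (h : 10 * d ≤ m) :
    9 ^ j * Nat.choose m (d - j) ≤ Nat.choose m d := by
  induction j with
  | zero => simp
  | succ k ih =>
    have hk : k ≤ d := by omega
    have h1 : 10 * ((d - (k+1)) + 1) ≤ m + 1 := by omega
    have := step9' h1
    have he : d - (k+1) + 1 = d - k := by omega
    rw [he] at this
    calc 9 ^ (k+1) * Nat.choose m (d - (k+1))
        = 9 ^ k * (9 * Nat.choose m (d - (k+1))) := by ring
      _ ≤ 9 ^ k * Nat.choose m (d - k) := Nat.mul_le_mul_left _ this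
      _ ≤ Nat.choose m d := ih hk

lemma sumBound' {m d : ℕ} (h : 10 * d ≤ m) :
    8 * ∑ i ∈ range (d + 1), Nat.choose m i ≤ 9 * Nat.choose m d := by
  induction d with
  | zero => simp
  | succ k ih =>
    have hk : 10 * k ≤ m := by omega
    have ihk := ih hk
    have hstep : 9 * Nat.choose m k ≤ Nat.choose m (k + 1) := step9' (by omega)
    rw [Finset.sum_range_succ]
    calc 8 * (∑ i ∈ range (k + 1), Nat.choose m i + Nat.choose m (k+1))
        = 8 * ∑ i ∈ range (k + 1), Nat.choose m i + 8 * Nat.choose m (k+1) := by ring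
      _ ≤ 9 * Nat.choose m k + 8 * Nat.choose m (k+1) := by omega
      _ ≤ 9 * Nat.choose m (k+1) := by omega

lemma fsum' (n : ℕ) :
    ∑ b ∈ range n, Nat.choose 10 b * 9 ^ (10 - b) ≤ 10 ^ 10 := by
  have h11 : ∑ b ∈ range 11, Nat.choose 10 b * 9 ^ (10 - b) = 10 ^ 10 := by
    decide
  rcases le_or_gt n 11 with h | h
  · calc ∑ b ∈ range n, Nat.choose 10 b * 9 ^ (10 - b)
        ≤ ∑ b ∈ range 11, Nat.choose 10 b * 9 ^ (10 - b) :=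
        Finset.sum_le_sum_of_subset (Finset.range_subset_range.2 h)
      _ = 10 ^ 10 := h11
  · have : ∑ b ∈ range n, Nat.choose 10 b * 9 ^ (10 - b)
        = ∑ b ∈ range 11, Nat.choose 10 b * 9 ^ (10 - b) := by
      refine (Finset.sum_subset (Finset.range_subset_range.2 (by omega)) ?_).symm
      intro x _ hx
      simp only [Finset.mem_range, not_lt] at hx
      rw [Nat.choose_eq_zero_of_lt (by omega)]
      ring
    omega

lemma growth' (d : ℕ) :
    Nat.choose (10 * d + 11) (d + 1) ≤ 32 * Nat.choose (10 * d + 1) d := by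
  set m := 10 * d + 1 with hm
  have hvdm : Nat.choose (m + 10) (d + 1)
      = ∑ ij ∈ Finset.HasAntidiagonal.antidiagonal (d + 1), Nat.choose m ij.1 * Nat.choose 10 ij.2 :=
    Nat.add_choose_eq m 10 (d + 1)
  have hterm : ∀ ij ∈ Finset.HasAntidiagonal.antidiagonal (d + 1),
      9 ^ 9 * (Nat.choose m ij.1 * Nat.choose 10 ij.2)
        ≤ Nat.choose m d * (Nat.choose 10 ij.2 * 9 ^ (10 - ij.2)) := by
    rintro ⟨a, b⟩ hab
    simp only [Finset.HasAntidiagonal.mem_antidiagonal] at hab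
    rcases Nat.eq_zero_or_pos b with hb | hb
    · subst hb
      have ha : a = d + 1 := by omega
      subst ha
      have key := Nat.choose_succ_right_eq m d
      have h1 : Nat.choose m (d + 1) * (d + 1) = Nat.choose m d * (9 * d + 1) := by
        rw [key]; congr 1; omega
      have h2 : Nat.choose m (d + 1) ≤ 9 * Nat.choose m d := by
        have : Nat.choose m (d + 1) * (d + 1) ≤ 9 * Nat.choose m d * (d + 1) := by
          rw [h1]; nlinarith [Nat.choose_pos (show d ≤ m by omega)]
        exact Nat.le_of_mul_le_mul_right this (by omega)
      simp only [Nat.choose_zero_right, Nat.sub_zero]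
      calc 9 ^ 9 * (Nat.choose m (d + 1) * 1) = 9 ^ 9 * Nat.choose m (d + 1) := by ring
        _ ≤ 9 ^ 9 * (9 * Nat.choose m d) := Nat.mul_le_mul_left _ h2
        _ = Nat.choose m d * (1 * 9 ^ 10) := by ring
    · rcases le_or_gt b 10 with hb10 | hb10
      · have ha : a = d - (b - 1) := by omega
        have hpow := pow9' (m := m) (d := d) (b - 1) (by omega) (by omega)
        have h99 : (9:ℕ) ^ 9 = 9 ^ (10 - b) * 9 ^ (b - 1) := by
          rw [← pow_add]; congr 1; omega
        calc 9 ^ 9 * (Nat.choose m a * Nat.choose 10 b)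
            = Nat.choose 10 b * 9 ^ (10 - b) * (9 ^ (b-1) * Nat.choose m (d - (b-1))) := by
              rw [h99, ha]; ring
          _ ≤ Nat.choose 10 b * 9 ^ (10 - b) * Nat.choose m d := Nat.mul_le_mul_left _ hpow
          _ = Nat.choose m d * (Nat.choose 10 b * 9 ^ (10 - b)) := by ring
      · rw [Nat.choose_eq_zero_of_lt hb10]
        simp
  have hsum : 9 ^ 9 * Nat.choose (m + 10) (d + 1)
      ≤ Nat.choose m d * ∑ ij ∈ Finset.HasAntidiagonal.antidiagonal (d + 1),
          Nat.choose 10 ij.2 * 9 ^ (10 - ij.2) := by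
    rw [hvdm, Finset.mul_sum, Finset.mul_sum]
    exact Finset.sum_le_sum hterm
  have hanti : ∑ ij ∈ Finset.HasAntidiagonal.antidiagonal (d + 1),
      Nat.choose 10 ij.2 * 9 ^ (10 - ij.2)
      = ∑ b ∈ range (d + 2), Nat.choose 10 b * 9 ^ (10 - b) := by
    rw [Finset.Nat.sum_antidiagonal_eq_sum_range_succ (fun a b => Nat.choose 10 b * 9 ^ (10 - b))]
    have := Finset.sum_range_reflect (fun b => Nat.choose 10 b * 9 ^ (10 - b)) (d + 2)
    rw [← this]
    exact Finset.sum_congr rfl fun i hi => by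
      simp only [Finset.mem_range] at hi
      congr 2 <;> omega
  have hfin : 9 ^ 9 * Nat.choose (m + 10) (d + 1) ≤ Nat.choose m d * 10 ^ 10 := by
    refine hsum.trans ?_
    rw [hanti]
    exact Nat.mul_le_mul_left _ (fsum' _)
  have h32 : Nat.choose m d * 10 ^ 10 ≤ 9 ^ 9 * (32 * Nat.choose m d) := by
    have : (10:ℕ) ^ 10 ≤ 9 ^ 9 * 32 := by norm_num
    calc Nat.choose m d * 10 ^ 10 ≤ Nat.choose m d * (9 ^ 9 * 32) := Nat.mul_le_mul_left _ this
      _ = 9 ^ 9 * (32 * Nat.choose m d) := by ring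
  have hh := hfin.trans h32
  have heq : m + 10 = 10 * d + 11 := by omega
  rw [heq] at hh
  exact Nat.le_of_mul_le_mul_left hh (by norm_num)

lemma pow32' (d : ℕ) : Nat.choose (10 * d + 1) d ≤ 32 ^ d := by
  induction d with
  | zero => simp
  | succ k ih =>
    have h1 : 10 * (k + 1) + 1 = 10 * k + 11 := by omega
    rw [h1]
    calc Nat.choose (10 * k + 11) (k + 1) ≤ 32 * Nat.choose (10 * k + 1) k := growth' k
      _ ≤ 32 * 32 ^ k := Nat.mul_le_mul_left _ ih
      _ = 32 ^ (k + 1) := by ring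

lemma numMain (d : ℕ) :
    (∑ i ∈ range (d + 1), Nat.choose (10 * d + 1) i) ^ 2 < 2 ^ (10 * d + 1) := by
  set S := ∑ i ∈ range (d + 1), Nat.choose (10 * d + 1) i with hS
  have h1 : 8 * S ≤ 9 * Nat.choose (10 * d + 1) d := sumBound' (by omega)
  have h2 : Nat.choose (10 * d + 1) d ≤ 32 ^ d := pow32' d
  have h3 : 8 * S ≤ 9 * 32 ^ d := h1.trans (Nat.mul_le_mul_left _ h2)
  have h4 : (8 * S) ^ 2 ≤ (9 * 32 ^ d) ^ 2 := Nat.pow_le_pow_left h3 2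
  have h5 : 64 * S ^ 2 ≤ 81 * (32 ^ d) ^ 2 := by
    calc 64 * S ^ 2 = (8 * S) ^ 2 := by ring
      _ ≤ (9 * 32 ^ d) ^ 2 := h4
      _ = 81 * (32 ^ d) ^ 2 := by ring
  have hpow : (32 ^ d : ℕ) ^ 2 = 1024 ^ d := by
    rw [← pow_mul, mul_comm, pow_mul]
    norm_num
  have h2p : (2:ℕ) ^ (10 * d + 1) = 2 * 1024 ^ d := by
    rw [pow_succ']
    congr 1
    rw [show (1024:ℕ) = 2 ^ 10 by norm_num, ← pow_mul]
  have hposs : 0 < (1024:ℕ) ^ d := Nat.pow_pos (n := d) (by norm_num)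
  have h6 : 64 * S ^ 2 < 64 * (2 * 1024 ^ d) := by
    rw [hpow] at h5
    omega
  rw [← h2p] at h6
  exact Nat.lt_of_mul_lt_mul_left h6

/-! ### Combinatorial lemmas -/

/-- The restriction of a binary function to a finite set, as a finset of the subtype. -/
def restr {X : Type*} (S : Finset X) (h : X → Bool) : Finset {x // x ∈ S} :=
  Finset.univ.filter (fun x => h x.1 = true)

lemma mem_restr {X : Type*} {S : Finset X} {h : X → Bool} {y : {x // x ∈ S}} :
    y ∈ restr S h ↔ h y.1 = true := by
  simp [restr]

/-- Sauer–Shelah bound for restrictions. -/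
lemma restr_card_le {X : Type*} (H : Set (X → Bool)) (dH : ℕ)
    (hHb : ∀ T : Finset X, Shatters H T → T.card ≤ dH) (S : Finset X) :
    (Set.toFinite (restr S '' H)).toFinset.card
      ≤ ∑ i ∈ range (dH + 1), Nat.choose S.card i := by
  classical
  set α := {x // x ∈ S}
  set 𝒜 : Finset (Finset α) := (Set.toFinite (restr S '' H)).toFinset with h𝒜
  -- every Mathlib-shattered set has card ≤ dH
  have hvc : ∀ s : Finset α, 𝒜.Shatters s → s.card ≤ dH := by
    intro s hs
    have hsh : Shatters H (s.image Subtype.val) := by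
      intro b
      have ht : s.filter (fun y => b y.1 = true) ⊆ s := Finset.filter_subset _ _
      obtain ⟨u, hu, hsu⟩ := hs ht
      rw [h𝒜, Set.Finite.mem_toFinset] at hu
      obtain ⟨h, hH, hφ⟩ := hu
      refine ⟨h, hH, ?_⟩
      intro x hx
      rw [Finset.mem_image] at hx
      obtain ⟨y, hy, rfl⟩ := hx
      have h1 : (y ∈ u) = (y ∈ s.filter (fun y => b y.1 = true)) := by
        rw [← hsu]
        simp only [Finset.mem_inter, eq_iff_iff]
        constructor
        · intro hyu; exact ⟨hy, hyu⟩
        · exact fun h => h.2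
      have h2 : y ∈ u ↔ h y.1 = true := by rw [← hφ]; exact mem_restr
      have h3 : y ∈ s.filter (fun y => b y.1 = true) ↔ b y.1 = true := by
        simp [Finset.mem_filter, hy]
      rw [h1, h3] at h2
      rcases Bool.dichotomy (b y.1) with hb | hb <;>
        rcases Bool.dichotomy (h y.1) with hh | hh <;> simp_all
    have := hHb _ hsh
    rwa [Finset.card_image_of_injective _ Subtype.val_injective] at this
  have hvcdim : 𝒜.vcDim ≤ dH := by
    rw [Finset.vcDim]
    exact Finset.sup_le fun s hs => hvc s (Finset.mem_shatterer.1 hs)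
  calc 𝒜.card ≤ 𝒜.shatterer.card := Finset.card_le_card_shatterer 𝒜
    _ ≤ ∑ k ∈ Finset.Iic 𝒜.vcDim, Nat.choose (Fintype.card α) k :=
        Finset.card_shatterer_le_sum_vcDim
    _ ≤ ∑ k ∈ Finset.Iic dH, Nat.choose (Fintype.card α) k :=
        Finset.sum_le_sum_of_subset (Finset.Iic_subset_Iic.2 hvcdim)
    _ = ∑ i ∈ range (dH + 1), Nat.choose S.card i := by
        have hIic : Finset.Iic dH = range (dH + 1) := by
          ext x; simp [Nat.lt_succ_iff]
        rw [hIic, Fintype.card_coe]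

/-- If the XOR class shatters `S`, then `2 ^ |S|` is at most the product of the
restriction counts. -/
lemma xor_count {X : Type*} (H F : Set (X → Bool)) (S : Finset X)
    (hS : Shatters {g : X → Bool | ∃ h ∈ H, ∃ f ∈ F,
        g = fun x => Bool.xor (h x) (f x)} S) :
    2 ^ S.card ≤ (Set.toFinite (restr S '' H)).toFinset.card
      * (Set.toFinite (restr S '' F)).toFinset.card := by
  classical
  set α := {x // x ∈ S}
  set G : Set (X → Bool) := {g : X → Bool | ∃ h ∈ H, ∃ f ∈ F,
      g = fun x => Bool.xor (h x) (f x)} with hG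
  set 𝒜 : Finset (Finset α) := (Set.toFinite (restr S '' H)).toFinset
  set ℬ : Finset (Finset α) := (Set.toFinite (restr S '' F)).toFinset
  set 𝒢 : Finset (Finset α) := (Set.toFinite (restr S '' G)).toFinset with h𝒢
  -- 𝒢 is everything
  have hall : ∀ B : Finset α, B ∈ 𝒢 := by
    intro B
    obtain ⟨g, hg, hgb⟩ := hS (fun x => if h : x ∈ S then decide (⟨x, h⟩ ∈ B) else false)
    rw [h𝒢, Set.Finite.mem_toFinset]
    refine ⟨g, hg, ?_⟩
    ext y
    rw [mem_restr]
    have := hgb y.1 y.2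
    rw [this, dif_pos y.2]
    simp
  have hcard𝒢 : 2 ^ S.card ≤ 𝒢.card := by
    have huniv : 𝒢 = Finset.univ := Finset.eq_univ_iff_forall.2 hall
    rw [huniv, Finset.card_univ, Fintype.card_finset, Fintype.card_coe]
  -- 𝒢 injects into pairs
  have hsub : 𝒢 ⊆ Finset.image (fun p : Finset α × Finset α => symmDiff p.1 p.2) (𝒜 ×ˢ ℬ) := by
    intro B hB
    rw [h𝒢, Set.Finite.mem_toFinset] at hB
    obtain ⟨g, hg, rfl⟩ := hB
    obtain ⟨h, hH, f, hF, rfl⟩ := hg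
    rw [Finset.mem_image]
    refine ⟨(restr S h, restr S f), ?_, ?_⟩
    · rw [Finset.mem_product]
      exact ⟨Set.Finite.mem_toFinset _ |>.2 ⟨h, hH, rfl⟩,
        Set.Finite.mem_toFinset _ |>.2 ⟨f, hF, rfl⟩⟩
    · ext y
      rw [mem_restr, Finset.mem_symmDiff]
      simp only [mem_restr]
      rcases Bool.dichotomy (h y.1) with h1 | h1 <;>
        rcases Bool.dichotomy (f y.1) with h2 | h2 <;> (simp [restr, h1, h2] <;> exact Finset.mem_attach _ _)
  calc 2 ^ S.card ≤ 𝒢.card := hcard𝒢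
    _ ≤ (Finset.image (fun p : Finset α × Finset α => symmDiff p.1 p.2) (𝒜 ×ˢ ℬ)).card :=
        Finset.card_le_card hsub
    _ ≤ (𝒜 ×ˢ ℬ).card := Finset.card_image_le
    _ = 𝒜.card * ℬ.card := Finset.card_product _ _

/-! ### Main theorem -/

/-- If `H` has VC dimension `d_H` and `F` has VC dimension `d_F`,
then the XOR class `H ⊕ F = {x ↦ 1[h(x) ≠ f(x)]}` has VC dimension at most
`10 · max{d_H, d_F}`. -/
theorem stmt6 {X : Type*} (H F : Set (X → Bool)) (dH dF : ℕ)
    (hH : vcDim H = (dH : ℕ∞)) (hF : vcDim F = (dF : ℕ∞)) :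
    vcDim {g : X → Bool | ∃ h ∈ H, ∃ f ∈ F, g = fun x => Bool.xor (h x) (f x)}
      ≤ ((10 * max dH dF : ℕ) : ℕ∞) := by
  classical
  set d := max dH dF with hd
  -- upper bounds on shattered sets for H and F
  have hHb : ∀ T : Finset X, Shatters H T → T.card ≤ dH := by
    intro T hT
    have : (T.card : ℕ∞) ≤ vcDim H := le_sSup ⟨T, rfl, hT⟩
    rw [hH] at this
    exact_mod_cast this
  have hFb : ∀ T : Finset X, Shatters F T → T.card ≤ dF := by
    intro T hT
    have : (T.card : ℕ∞) ≤ vcDim F := le_sSup ⟨T, rfl, hT⟩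
    rw [hF] at this
    exact_mod_cast this
  refine sSup_le ?_
  rintro n ⟨T, hcard, hT⟩
  rw [← hcard, Nat.cast_le]
  by_contra hgt
  push_neg at hgt
  -- extract a subset of card exactly 10*d+1
  obtain ⟨S, hSsub, hScard⟩ := Finset.exists_subset_card_eq (show 10 * d + 1 ≤ T.card by omega)
  have hSsh : Shatters {g : X → Bool | ∃ h ∈ H, ∃ f ∈ F,
      g = fun x => Bool.xor (h x) (f x)} S := by
    intro b
    obtain ⟨g, hg, hgb⟩ := hT b
    exact ⟨g, hg, fun x hx => hgb x (hSsub hx)⟩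
  have hcount := xor_count H F S hSsh
  have hA := restr_card_le H dH hHb S
  have hB := restr_card_le F dF hFb S
  have hAd : (Set.toFinite (restr S '' H)).toFinset.card
      ≤ ∑ i ∈ range (d + 1), Nat.choose S.card i := by
    refine hA.trans (Finset.sum_le_sum_of_subset (Finset.range_subset_range.2 ?_))
    omega
  have hBd : (Set.toFinite (restr S '' F)).toFinset.card
      ≤ ∑ i ∈ range (d + 1), Nat.choose S.card i := by
    refine hB.trans (Finset.sum_le_sum_of_subset (Finset.range_subset_range.2 ?_))
    omega
  have hmain : 2 ^ S.card ≤ (∑ i ∈ range (d + 1), Nat.choose S.card i) ^ 2 := by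
    calc 2 ^ S.card ≤ _ := hcount
      _ ≤ (∑ i ∈ range (d + 1), Nat.choose S.card i) ^ 2 := by
        rw [sq]; exact Nat.mul_le_mul hAd hBd
  rw [hScard] at hmain
  have := numMain d
  omega
end

section
/- If G ⊆ {g : X → ℝ} forms a real vector space of dimension d (under pointwise addition and scalar multiplication), then the pseudo-dimension of G equals d. -/
/-- A class of real-valued functions pseudo-shatters a finite set if there are
witnesses `r` such that every sign pattern of `g x + r x` is realized. -/
def PShatters {X : Type*} (F : Set (X → ℝ)) (S : Finset X) : Prop :=
  ∃ r : X → ℝ, ∀ b : X → Bool, ∃ f ∈ F, ∀ x ∈ S, (0 < f x + r x ↔ b x = true)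

/-- Pseudo-dimension of a class of real-valued functions. -/
noncomputable def pdim {X : Type*} (F : Set (X → ℝ)) : ℕ∞ :=
  sSup {n : ℕ∞ | ∃ S : Finset X, (S.card : ℕ∞) = n ∧ PShatters F S}

open Module Finset


lemma helperA {ι : Type*} [Fintype ι] [DecidableEq ι] {M : Type*} [AddCommGroup M] [Module ℝ M]
    (L : M →ₗ[ℝ] (ι → ℝ)) (h : LinearMap.range L ≠ ⊤) :
    ∃ a : ι → ℝ, a ≠ 0 ∧ ∀ m, ∑ i, a i * L m i = 0 := by
  obtain ⟨φ, hφ0, hφ⟩ := Submodule.exists_dual_map_eq_bot_of_lt_top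
    (p := LinearMap.range L) h.lt_top inferInstance
  have hvan : ∀ m, φ (L m) = 0 := by
    intro m
    have : φ (L m) ∈ (LinearMap.range L).map φ := ⟨L m, ⟨m, rfl⟩, rfl⟩
    simpa [hφ] using this
  refine ⟨fun i => φ (fun j => if i = j then 1 else 0), ?_, ?_⟩
  · intro ha
    apply hφ0
    refine LinearMap.ext fun v => ?_
    rw [LinearMap.pi_apply_eq_sum_univ φ v]
    have h1 : ∀ i, φ (fun j => if i = j then 1 else 0) = 0 := fun i => congrFun ha i
    simp [h1]
  · intro m
    rw [show (∑ i, φ (fun j => if i = j then 1 else 0) * L m i)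
        = ∑ i, L m i • φ (fun j => if i = j then 1 else 0) from
      Finset.sum_congr rfl (fun i _ => by rw [smul_eq_mul, mul_comm]),
      ← LinearMap.pi_apply_eq_sum_univ, hvan]

lemma helperB {ι : Type*} [Fintype ι] {M : Type*} [AddCommGroup M] [Module ℝ M]
    (e : ι → (M →ₗ[ℝ] ℝ)) (he : LinearIndependent ℝ e) :
    Function.Surjective (LinearMap.pi e) := by
  rw [← LinearMap.range_eq_top]
  by_contra h
  classical
  obtain ⟨a, ha, haL⟩ := helperA (LinearMap.pi e) h
  have hz : ∑ i, a i • e i = 0 := by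
    ext m
    simpa [mul_comm] using haL m
  exact ha (funext fun i => Fintype.linearIndependent_iff.1 he a hz i)

lemma shatter_card_le {X : Type*} (G : Submodule ℝ (X → ℝ)) [FiniteDimensional ℝ G]
    {S : Finset X} (hS : PShatters (G : Set (X → ℝ)) S) :
    S.card ≤ Module.finrank ℝ G := by
  classical
  by_contra hlt
  push_neg at hlt
  set ev : ↥S → Module.Dual ℝ G := fun x => (LinearMap.proj (x : X)).comp G.subtype with hev
  have hnLI : ¬ LinearIndependent ℝ ev := by
    intro hli
    have := hli.fintype_card_le_finrank
    rw [Subspace.dual_finrank_eq, Fintype.card_coe] at this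
    omega
  obtain ⟨a, hsum, i0, hi0⟩ := Fintype.not_linearIndependent_iff.1 hnLI
  obtain ⟨r, hr⟩ := hS
  -- key: for any g ∈ G, the a-weighted sum of values vanishes
  have key : ∀ g ∈ G, ∑ i : ↥S, a i * g (i : X) = 0 := by
    intro g hg
    have := congrFun (congrArg (fun (φ : Module.Dual ℝ G) => φ.toFun) hsum) ⟨g, hg⟩
    simpa [ev, mul_comm] using this
  set A : X → ℝ := fun x => if h : x ∈ S then a ⟨x, h⟩ else 0 with hA
  have hAS : ∀ i : ↥S, A (i : X) = a i := fun i => dif_pos i.2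
  obtain ⟨gp, hgpG, hgp⟩ := hr (fun x => decide (0 < A x))
  obtain ⟨gm, hgmG, hgm⟩ := hr (fun x => decide (A x < 0))
  have hsump : ∑ i : ↥S, a i * (gp (i : X) + r (i : X)) = ∑ i : ↥S, a i * r (i : X) := by
    simp only [mul_add, Finset.sum_add_distrib, key gp hgpG, zero_add]
  have hsumm : ∑ i : ↥S, a i * (gm (i : X) + r (i : X)) = ∑ i : ↥S, a i * r (i : X) := by
    simp only [mul_add, Finset.sum_add_distrib, key gm hgmG, zero_add]
  have htermp : ∀ i : ↥S, 0 ≤ a i * (gp (i : X) + r (i : X)) := by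
    intro i
    have hiff := hgp (i : X) i.2
    rw [decide_eq_true_eq, hAS i] at hiff
    rcases lt_trichotomy (a i) 0 with h | h | h
    · have : ¬ (0 < gp (i : X) + r (i : X)) := fun hh => absurd (hiff.1 hh) (not_lt.2 h.le)
      exact mul_nonneg_of_nonpos_of_nonpos h.le (not_lt.1 this)
    · simp [h]
    · exact (mul_pos h (hiff.2 h)).le
  have htermm : ∀ i : ↥S, a i * (gm (i : X) + r (i : X)) ≤ 0 := by
    intro i
    have hiff := hgm (i : X) i.2
    rw [decide_eq_true_eq, hAS i] at hiff
    rcases lt_trichotomy (a i) 0 with h | h | h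
    · exact (mul_neg_of_neg_of_pos h (hiff.2 h)).le
    · simp [h]
    · have : ¬ (0 < gm (i : X) + r (i : X)) := fun hh => absurd (hiff.1 hh) (not_lt.2 h.le)
      exact mul_nonpos_of_nonneg_of_nonpos h.le (not_lt.1 this)
  rcases lt_trichotomy (a i0) 0 with h | h | h
  · -- strict negativity at i0 in the minus sum
    have hstrict : a i0 * (gm (i0 : X) + r (i0 : X)) < 0 := by
      have hiff := hgm (i0 : X) i0.2
      rw [decide_eq_true_eq, hAS i0] at hiff
      exact mul_neg_of_neg_of_pos h (hiff.2 h)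
    have h1 : ∑ i : ↥S, a i * (gm (i : X) + r (i : X)) < 0 :=
      Finset.sum_neg' (fun i _ => htermm i) ⟨i0, Finset.mem_univ i0, hstrict⟩
    have h2 : (0:ℝ) ≤ ∑ i : ↥S, a i * (gp (i : X) + r (i : X)) :=
      Finset.sum_nonneg (fun i _ => htermp i)
    rw [hsumm] at h1
    rw [hsump] at h2
    linarith
  · exact hi0 h
  · have hstrict : 0 < a i0 * (gp (i0 : X) + r (i0 : X)) := by
      have hiff := hgp (i0 : X) i0.2
      rw [decide_eq_true_eq, hAS i0] at hiff
      exact mul_pos h (hiff.2 h)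
    have h1 : 0 < ∑ i : ↥S, a i * (gp (i : X) + r (i : X)) :=
      Finset.sum_pos' (fun i _ => htermp i) ⟨i0, Finset.mem_univ i0, hstrict⟩
    have h2 : ∑ i : ↥S, a i * (gm (i : X) + r (i : X)) ≤ 0 :=
      Finset.sum_nonpos (fun i _ => htermm i)
    rw [hsump] at h1
    rw [hsumm] at h2
    linarith

lemma exists_shattered {X : Type*} (G : Submodule ℝ (X → ℝ)) [FiniteDimensional ℝ G] :
    ∃ S : Finset X, S.card = Module.finrank ℝ G ∧ PShatters (G : Set (X → ℝ)) S := by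
  classical
  set ev : X → Module.Dual ℝ G := fun x => (LinearMap.proj x).comp G.subtype with hev
  have hspan : Submodule.span ℝ (Set.range ev) = ⊤ := by
    apply Submodule.span_eq_top_of_ne_zero
    intro z hz
    have hz' : (z : X → ℝ) ≠ 0 := fun h => hz (Subtype.ext h)
    obtain ⟨x, hx⟩ := Function.ne_iff.1 hz'
    exact ⟨ev x, Set.mem_range_self x, hx⟩
  obtain ⟨t, hts, htspan, htLI⟩ := exists_linearIndependent ℝ (Set.range ev)
  have htfin : t.Finite := htLI.setFinite
  haveI : Fintype t := htfin.fintype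
  have htcard : t.toFinset.card = Module.finrank ℝ G := by
    have h1 := finrank_span_set_eq_card htLI
    rw [htspan, hspan, finrank_top, Subspace.dual_finrank_eq] at h1
    exact h1.symm
  have hchoice : ∀ φ : ↥t, ∃ x : X, ev x = (φ : Module.Dual ℝ G) := fun φ => hts φ.2
  choose c hc using hchoice
  have hcinj : Function.Injective c := by
    intro φ ψ h
    apply Subtype.ext
    rw [← hc φ, ← hc ψ, h]
  set S : Finset X := Finset.univ.image c with hS
  have hScard : S.card = Module.finrank ℝ G := by
    rw [hS, Finset.card_image_of_injective _ hcinj, Finset.card_univ,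
      ← Set.toFinset_card, htcard]
  have hmem : ∀ x : ↥S, ev (x : X) ∈ t := by
    intro x
    obtain ⟨φ, _, hφ⟩ := Finset.mem_image.1 x.2
    rw [← hφ, hc φ]
    exact φ.2
  set j : ↥S → ↥t := fun x => ⟨ev (x : X), hmem x⟩ with hj
  have hjinj : Function.Injective j := by
    intro x y h
    apply Subtype.ext
    obtain ⟨φ, _, hφ⟩ := Finset.mem_image.1 x.2
    obtain ⟨ψ, _, hψ⟩ := Finset.mem_image.1 y.2
    have hval : ev (x : X) = ev (y : X) := congrArg Subtype.val h
    rw [← hφ, ← hψ] at hval ⊢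
    rw [hc φ, hc ψ] at hval
    exact congrArg c (Subtype.ext hval)
  have hLI : LinearIndependent ℝ (fun x : ↥S => ev (x : X)) := htLI.comp j hjinj
  have hsurj := helperB (fun x : ↥S => ev (x : X)) hLI
  refine ⟨S, hScard, fun _ => 0, fun b => ?_⟩
  obtain ⟨g, hg⟩ := hsurj (fun x => if b (x : X) then 1 else -1)
  refine ⟨(g : X → ℝ), SetLike.mem_coe.2 g.2, fun x hx => ?_⟩
  have hgx : (g : X → ℝ) x = if b x then 1 else -1 := by
    have := congrFun hg ⟨x, hx⟩
    simpa [ev] using this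
  rw [add_zero]
  cases hb : b x
  · rw [hb] at hgx
    simp only [Bool.false_eq_true, if_false] at hgx
    rw [hgx]
    norm_num
  · rw [hb] at hgx
    simp only [if_true] at hgx
    rw [hgx]
    norm_num

/-- If `G ⊆ {g : X → ℝ}` forms a vector space of dimension `d`
(under pointwise operations), then the pseudo-dimension of `G` equals `d`. -/
theorem stmt8 {X : Type*} (G : Submodule ℝ (X → ℝ)) (d : ℕ)
    [FiniteDimensional ℝ G] (hd : Module.finrank ℝ G = d) :
    pdim (G : Set (X → ℝ)) = (d : ℕ∞) := by
  apply le_antisymm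
  · apply sSup_le
    rintro n ⟨S, hcard, hsh⟩
    rw [← hcard]
    exact_mod_cast hd ▸ shatter_card_le G hsh
  · apply le_sSup
    obtain ⟨S, hScard, hsh⟩ := exists_shattered G
    exact ⟨S, by rw [hScard, hd], hsh⟩
end

section
/- (Sparsification of distributions preserves expectations uniformly over a finite domain.) Let G be a set of functions X → [0, M], let D ⊆ X be finite, let K be a positive integer, and let ε' > 0. For every probability distribution p on G there exists a distribution p_s supported on at most s = ⌈M² · log(2K|D|) · 2/ε'²⌉ elements of G (a uniform distribution over s i.i.d. draws from p, for an appropriate realization) such that for every x ∈ D: |E_{g∼p}[g(x)] − E_{g∼p_s}[g(x)]| ≤ ε'. -/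
open Finset

set_option maxHeartbeats 400000

private lemma cen_lemma {G : Type*} [Fintype G] (p f : G → ℝ) (μ : ℝ)
    (hp1 : ∑ g, p g = 1) (hμ : μ = ∑ g, p g * f g) :
    ∑ g, p g * (f g - μ) = 0 := by
  have e1 : ∑ g, p g * (f g - μ) = ∑ g, (p g * f g - μ * p g) :=
    Finset.sum_congr rfl fun g _ => by ring
  rw [e1, Finset.sum_sub_distrib, ← Finset.mul_sum, hp1, mul_one, hμ, sub_self]

private lemma var_lemma {G : Type*} [Fintype G] (p f : G → ℝ) (M μ : ℝ) (hM : 0 < M)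
    (hp0 : ∀ g, 0 ≤ p g) (hp1 : ∑ g, p g = 1)
    (hf : ∀ g, 0 ≤ f g ∧ f g ≤ M) (hμ : μ = ∑ g, p g * f g) :
    ∑ g, p g * (f g - μ) ^ 2 ≤ M ^ 2 / 4 := by
  have hμ0 : 0 ≤ μ := hμ ▸ Finset.sum_nonneg fun g _ => mul_nonneg (hp0 g) (hf g).1
  have hμM : μ ≤ M := by
    rw [hμ]
    calc ∑ g, p g * f g ≤ ∑ g, p g * M :=
          Finset.sum_le_sum fun g _ => mul_le_mul_of_nonneg_left (hf g).2 (hp0 g)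
      _ = M := by rw [← Finset.sum_mul, hp1, one_mul]
  have e1 : ∑ g, p g * (f g - μ) ^ 2
      = ∑ g, (p g * f g ^ 2 - (2 * μ) * (p g * f g) + μ ^ 2 * p g) :=
    Finset.sum_congr rfl fun g _ => by ring
  have e2 : ∑ g, ((p g * f g ^ 2 - (2 * μ) * (p g * f g)) + μ ^ 2 * p g)
      = (∑ g, (p g * f g ^ 2 - (2 * μ) * (p g * f g))) + ∑ g, μ ^ 2 * p g :=
    Finset.sum_add_distrib
  have e3 : ∑ g, (p g * f g ^ 2 - (2 * μ) * (p g * f g))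
      = (∑ g, p g * f g ^ 2) - ∑ g, (2 * μ) * (p g * f g) :=
    Finset.sum_sub_distrib _ _
  have e4 : ∑ g, (2 * μ) * (p g * f g) = 2 * μ * μ := by
    rw [← Finset.mul_sum, ← hμ]
  have e5 : ∑ g, μ ^ 2 * p g = μ ^ 2 := by
    rw [← Finset.mul_sum, hp1, mul_one]
  have hsq : ∑ g, p g * f g ^ 2 ≤ M * μ := by
    calc ∑ g, p g * f g ^ 2 ≤ ∑ g, M * (p g * f g) := by
          apply Finset.sum_le_sum
          intro g _
          have h1 := (hf g).1
          have h2 := (hf g).2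
          have h3 := hp0 g
          nlinarith [mul_nonneg h3 (mul_nonneg h1 (by linarith : (0:ℝ) ≤ M - f g))]
      _ = M * μ := by rw [← Finset.mul_sum, ← hμ]
    -- done
  rw [e1, e2, e3, e4, e5]
  nlinarith [sq_nonneg (M - 2 * μ)]

private lemma quad_ineq {M e : ℝ} (hM : 0 < M) (h1 : M ≤ 2 * e) (h2 : e ≤ M) :
    2 * e ^ 2 < M * (4 * e - M) := by
  nlinarith [mul_nonneg (show (0:ℝ) ≤ e - M / 2 by linarith)
    (show (0:ℝ) ≤ M - e by linarith), mul_pos hM (show (0:ℝ) < e by linarith)]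

private lemma exp_le_quad {u : ℝ} (hu : |u| ≤ 1) : Real.exp u ≤ 1 + u + u ^ 2 := by
  have h := Real.exp_bound hu (n := 2) (by norm_num)
  have hsum : ∑ m ∈ Finset.range 2, u ^ m / m.factorial = 1 + u := by
    simp [Finset.sum_range_succ]
  rw [hsum] at h
  have h2 : Real.exp u - (1 + u) ≤ |u| ^ 2 * (3 / (2 * 2)) := by
    have := abs_le.mp h
    norm_num at this ⊢
    linarith [this.2]
  have : |u| ^ 2 = u ^ 2 := sq_abs u
  nlinarith [sq_nonneg u]

private lemma mgf_bound {G : Type*} [Fintype G] (p q : G → ℝ) (M lam : ℝ)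
    (hp0 : ∀ g, 0 ≤ p g) (hp1 : ∑ g, p g = 1)
    (hq : ∀ g, |q g| ≤ M) (hcen : ∑ g, p g * q g = 0)
    (hvar : ∑ g, p g * q g ^ 2 ≤ M ^ 2 / 4)
    (hlam : 0 ≤ lam) (hlamM : lam * M ≤ 1) :
    ∑ g, p g * Real.exp (lam * q g) ≤ Real.exp (lam ^ 2 * (M ^ 2 / 4)) := by
  have h1 : ∑ g, p g * Real.exp (lam * q g)
      ≤ ∑ g, p g * (1 + lam * q g + (lam * q g) ^ 2) := by
    apply Finset.sum_le_sum
    intro g _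
    apply mul_le_mul_of_nonneg_left _ (hp0 g)
    apply exp_le_quad
    rw [abs_mul, abs_of_nonneg hlam]
    calc lam * |q g| ≤ lam * M := mul_le_mul_of_nonneg_left (hq g) hlam
      _ ≤ 1 := hlamM
  have h2 : ∑ g, p g * (1 + lam * q g + (lam * q g) ^ 2)
      = (∑ g, p g) + lam * (∑ g, p g * q g) + lam ^ 2 * (∑ g, p g * q g ^ 2) := by
    rw [Finset.mul_sum, Finset.mul_sum, ← Finset.sum_add_distrib, ← Finset.sum_add_distrib]
    exact Finset.sum_congr rfl fun g _ => by ring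
  rw [h2, hp1, hcen] at h1
  have h3 : (1 : ℝ) + lam * 0 + lam ^ 2 * ∑ g, p g * q g ^ 2
      ≤ 1 + lam ^ 2 * (M ^ 2 / 4) := by
    have := mul_le_mul_of_nonneg_left hvar (sq_nonneg lam)
    linarith
  calc ∑ g, p g * Real.exp (lam * q g) ≤ 1 + lam ^ 2 * (M ^ 2 / 4) := le_trans h1 h3
    _ ≤ Real.exp (lam ^ 2 * (M ^ 2 / 4)) := by
        linarith [Real.add_one_le_exp (lam ^ 2 * (M ^ 2 / 4))]

private lemma chernoff {G : Type*} [Fintype G] (p q : G → ℝ) (s : ℕ) (ε lam : ℝ)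
    (hp0 : ∀ g, 0 ≤ p g) (hlam : 0 ≤ lam) :
    ∑ v ∈ Finset.univ.filter (fun v : Fin s → G => (s : ℝ) * ε ≤ ∑ i, q (v i)),
        ∏ i, p (v i)
      ≤ Real.exp (-(lam * ((s : ℝ) * ε))) * (∑ g, p g * Real.exp (lam * q g)) ^ s := by
  set F : (Fin s → G) → ℝ :=
    fun v => Real.exp (-(lam * ((s : ℝ) * ε))) * (Real.exp (lam * ∑ i, q (v i)) * ∏ i, p (v i))
    with hF
  have hFnn : ∀ v, 0 ≤ F v := by
    intro v
    have : (0:ℝ) ≤ ∏ i, p (v i) := Finset.prod_nonneg fun i _ => hp0 (v i)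
    positivity
  have step1 : ∑ v ∈ Finset.univ.filter (fun v : Fin s → G => (s : ℝ) * ε ≤ ∑ i, q (v i)),
      ∏ i, p (v i) ≤ ∑ v : Fin s → G, F v := by
    calc ∑ v ∈ Finset.univ.filter (fun v : Fin s → G => (s : ℝ) * ε ≤ ∑ i, q (v i)),
          ∏ i, p (v i)
        ≤ ∑ v ∈ Finset.univ.filter (fun v : Fin s → G => (s : ℝ) * ε ≤ ∑ i, q (v i)), F v := by
          apply Finset.sum_le_sum
          intro v hv
          have hv' : (s : ℝ) * ε ≤ ∑ i, q (v i) := (Finset.mem_filter.mp hv).2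
          have hP : (0:ℝ) ≤ ∏ i, p (v i) := Finset.prod_nonneg fun i _ => hp0 (v i)
          have hone : (1:ℝ) ≤ Real.exp (-(lam * ((s : ℝ) * ε))) * Real.exp (lam * ∑ i, q (v i)) := by
            rw [← Real.exp_add]
            apply Real.one_le_exp
            have := mul_le_mul_of_nonneg_left hv' hlam
            linarith
          calc ∏ i, p (v i) = 1 * ∏ i, p (v i) := (one_mul _).symm
            _ ≤ (Real.exp (-(lam * ((s : ℝ) * ε))) * Real.exp (lam * ∑ i, q (v i))) * ∏ i, p (v i) :=
                mul_le_mul_of_nonneg_right hone hP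
            _ = F v := by rw [hF]; ring
      _ ≤ ∑ v : Fin s → G, F v :=
          Finset.sum_le_sum_of_subset_of_nonneg (Finset.filter_subset _ _)
            fun v _ _ => hFnn v
  have step2 : ∑ v : Fin s → G, F v
      = Real.exp (-(lam * ((s : ℝ) * ε))) * (∑ g, p g * Real.exp (lam * q g)) ^ s := by
    rw [Fintype.sum_pow, Finset.mul_sum]
    apply Finset.sum_congr rfl
    intro v _
    simp only [hF, Finset.prod_mul_distrib]
    have : Real.exp (lam * ∑ i : Fin s, q (v i)) = ∏ i : Fin s, Real.exp (lam * q (v i)) := by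
      rw [Finset.mul_sum, Real.exp_sum]
    rw [this]
    ring
  linarith [step1, step2.le, step2.ge]

/-- Sparsification of distributions preserves expectations
uniformly over a finite domain: for any distribution `p` on a class `G` of
`[0, M]`-valued functions, there is a multiset of `s = ⌈2M² log(2K|D|)/ε'²⌉`
members of `G` (a realization of `s` i.i.d. draws from `p`) whose uniform
average is `ε'`-close to the `p`-expectation at every point of `D`. -/
theorem stmt13 {X G : Type*} [Fintype G] (M : ℝ) (hM : 0 < M)
    (val : G → X → ℝ) (hval : ∀ g x, 0 ≤ val g x ∧ val g x ≤ M)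
    (D : Finset X) (K : ℕ) (hK : 0 < K)
    (ε' : ℝ) (hε' : 0 < ε')
    (p : G → ℝ) (hp0 : ∀ g, 0 ≤ p g) (hp1 : ∑ g, p g = 1)
    (s : ℕ) (hs : s = ⌈M ^ 2 * Real.log (2 * K * D.card) * 2 / ε' ^ 2⌉₊) :
    ∃ v : Fin s → G, ∀ x ∈ D,
      |(∑ g, p g * val g x) - (∑ i, val (v i) x) / s| ≤ ε' := by
  classical
  -- G is nonempty
  have hGne : Nonempty G := by
    rcases isEmpty_or_nonempty G with h | h
    · rw [Finset.univ_eq_empty, Finset.sum_empty] at hp1; norm_num at hp1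
    · exact h
  obtain ⟨g0⟩ := hGne
  -- bounds on the mean
  have hmean : ∀ x, 0 ≤ (∑ g, p g * val g x) ∧ (∑ g, p g * val g x) ≤ M := by
    intro x
    constructor
    · exact Finset.sum_nonneg fun g _ => mul_nonneg (hp0 g) (hval g x).1
    · calc ∑ g, p g * val g x ≤ ∑ g, p g * M :=
            Finset.sum_le_sum fun g _ => mul_le_mul_of_nonneg_left (hval g x).2 (hp0 g)
        _ = M := by rw [← Finset.sum_mul, hp1, one_mul]
  rcases le_or_gt ε' M with hεM | hMε
  swap
  · -- trivial case M < ε'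
    refine ⟨fun _ => g0, fun x hx => ?_⟩
    have h1 := hmean x
    have hcs : ∑ i : Fin s, val g0 x = (s : ℝ) * val g0 x := by
      rw [Finset.sum_const, Finset.card_univ, Fintype.card_fin, nsmul_eq_mul]
    have hA : 0 ≤ (∑ i : Fin s, val g0 x) / (s:ℝ) ∧ (∑ i : Fin s, val g0 x) / (s:ℝ) ≤ M := by
      rcases Nat.eq_zero_or_pos s with h0 | hpos
      · subst h0; simp; exact hM.le
      · have hsR : (0:ℝ) < s := by exact_mod_cast hpos
        rw [hcs, mul_div_cancel_left₀ _ (ne_of_gt hsR)]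
        exact hval g0 x
    rw [abs_le]
    constructor <;> [linarith [h1.2, hA.1]; linarith [h1.1, hA.2]]
  -- main case ε' ≤ M
  rcases D.eq_empty_or_nonempty with hD | hD
  · exact ⟨fun _ => g0, by simp [hD]⟩
  set n := D.card with hn_def
  have hn : 0 < n := Finset.card_pos.mpr hD
  have hnR : (1:ℝ) ≤ n := by exact_mod_cast hn
  have h2n : (0:ℝ) < 2 * n := by linarith
  set L0 := Real.log (2 * (n:ℝ)) with hL0def
  have hL0pos : 0 < L0 := Real.log_pos (by linarith)
  have hKR : (1:ℝ) ≤ K := by exact_mod_cast hK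
  have hLmono : L0 ≤ Real.log (2 * (K:ℝ) * (n:ℝ)) := by
    apply Real.log_le_log h2n
    have : (1:ℝ) * (2 * (n:ℝ)) ≤ (K:ℝ) * (2 * (n:ℝ)) :=
      mul_le_mul_of_nonneg_right hKR (by linarith)
    linarith
  have hsR : M ^ 2 * Real.log (2 * (K:ℝ) * (n:ℝ)) * 2 / ε' ^ 2 ≤ (s:ℝ) := by
    rw [hs]; exact_mod_cast Nat.le_ceil _
  have hε2 : (0:ℝ) < ε' ^ 2 := by positivity
  have hM2 : (0:ℝ) < M ^ 2 := by positivity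
  have hs2 : M ^ 2 * Real.log (2 * (K:ℝ) * (n:ℝ)) * 2 ≤ (s:ℝ) * ε' ^ 2 := by
    rw [div_le_iff₀ hε2] at hsR; linarith
  have hs2' : 2 * M ^ 2 * L0 ≤ (s:ℝ) * ε' ^ 2 := by
    have := mul_le_mul_of_nonneg_left hLmono hM2.le
    linarith
  have hspos : 0 < s := by
    rcases Nat.eq_zero_or_pos s with h0 | h; swap
    · exact h
    · exfalso; rw [h0] at hs2'; push_cast at hs2'
      have := mul_pos hM2 hL0pos
      linarith
  have hsRpos : (0:ℝ) < s := by exact_mod_cast hspos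
  set lam := min (2 * ε' / M ^ 2) (1 / M) with hlamdef
  have hlampos : 0 < lam := lt_min (by positivity) (by positivity)
  have hlamM : lam * M ≤ 1 := by
    have h := min_le_right (2 * ε' / M ^ 2) (1 / M)
    calc lam * M ≤ (1 / M) * M := mul_le_mul_of_nonneg_right h hM.le
      _ = 1 := by field_simp
  -- key arithmetic inequality
  have key : L0 < (s:ℝ) * (lam * ε' - lam ^ 2 * (M ^ 2 / 4)) := by
    rcases le_total (2 * ε' / M ^ 2) (1 / M) with hc | hc
    · have hle : lam = 2 * ε' / M ^ 2 := min_eq_left hc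
      have heq : lam * ε' - lam ^ 2 * (M ^ 2 / 4) = ε' ^ 2 / M ^ 2 := by
        rw [hle]; field_simp; ring
      rw [heq, ← mul_div_assoc, lt_div_iff₀ hM2]
      have := mul_pos hM2 hL0pos
      linarith
    · have hle : lam = 1 / M := min_eq_right hc
      have hM2ε : M ≤ 2 * ε' := by
        rw [div_le_div_iff₀ hM hM2] at hc
        nlinarith
      have heq : lam * ε' - lam ^ 2 * (M ^ 2 / 4) = (4 * ε' - M) / (4 * M) := by
        rw [hle]; field_simp
      rw [heq, ← mul_div_assoc, lt_div_iff₀ (by positivity : (0:ℝ) < 4 * M)]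
      have h4ε : (0:ℝ) ≤ 4 * ε' - M := by linarith
      have h1 : 2 * M ^ 2 * L0 * (4 * ε' - M) ≤ (s:ℝ) * ε' ^ 2 * (4 * ε' - M) :=
        mul_le_mul_of_nonneg_right hs2' h4ε
      have hquad : 2 * ε' ^ 2 < M * (4 * ε' - M) := quad_ineq hM hM2ε hεM
      have h5 : 2 * M * L0 * (2 * ε' ^ 2) < 2 * M * L0 * (M * (4 * ε' - M)) :=
        mul_lt_mul_of_pos_left hquad (by positivity)
      have hchain : L0 * (4 * M) * ε' ^ 2 < ((s:ℝ) * (4 * ε' - M)) * ε' ^ 2 := by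
        nlinarith [h1, h5]

      exact lt_of_mul_lt_mul_right hchain hε2.le
  -- nonnegativity of product weights
  have hw : ∀ v : Fin s → G, (0:ℝ) ≤ ∏ i, p (v i) :=
    fun v => Finset.prod_nonneg fun i _ => hp0 (v i)
  -- one-sided tail bound
  have side : ∀ q : G → ℝ, (∀ g, |q g| ≤ M) → (∑ g, p g * q g = 0) →
      (∑ g, p g * q g ^ 2 ≤ M ^ 2 / 4) →
      ∑ v ∈ Finset.univ.filter (fun v : Fin s → G => (s : ℝ) * ε' ≤ ∑ i, q (v i)),
        ∏ i, p (v i) < 1 / (2 * (n:ℝ)) := by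
    intro q hqb hqc hqv
    have hmgf := mgf_bound p q M lam hp0 hp1 hqb hqc hqv hlampos.le hlamM
    have hbase : (0:ℝ) ≤ ∑ g, p g * Real.exp (lam * q g) :=
      Finset.sum_nonneg fun g _ => mul_nonneg (hp0 g) (Real.exp_pos _).le
    calc ∑ v ∈ Finset.univ.filter (fun v : Fin s → G => (s : ℝ) * ε' ≤ ∑ i, q (v i)),
          ∏ i, p (v i)
        ≤ Real.exp (-(lam * ((s : ℝ) * ε'))) * (∑ g, p g * Real.exp (lam * q g)) ^ s :=
          chernoff p q s ε' lam hp0 hlampos.le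
      _ ≤ Real.exp (-(lam * ((s : ℝ) * ε'))) * (Real.exp (lam ^ 2 * (M ^ 2 / 4))) ^ s :=
          mul_le_mul_of_nonneg_left (pow_le_pow_left₀ hbase hmgf s) (Real.exp_pos _).le
      _ = Real.exp (-((s:ℝ) * (lam * ε' - lam ^ 2 * (M ^ 2 / 4)))) := by
          rw [← Real.exp_nat_mul, ← Real.exp_add]
          congr 1
          ring
      _ < Real.exp (-L0) := by
          apply Real.exp_lt_exp.mpr
          linarith
      _ = 1 / (2 * (n:ℝ)) := by
          rw [Real.exp_neg, hL0def, Real.exp_log h2n, one_div]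
  -- per-point bad-set bound
  have perx : ∀ x ∈ D,
      ∑ v ∈ Finset.univ.filter
          (fun v : Fin s → G => ε' < |(∑ g, p g * val g x) - (∑ i, val (v i) x) / s|),
        ∏ i, p (v i) < 1 / (n:ℝ) := by
    intro x hx
    set μ := ∑ g, p g * val g x with hμdef
    have hμb := hmean x
    -- properties of centered values
    have hqb1 : ∀ g, |val g x - μ| ≤ M := by
      intro g
      rw [abs_le]
      constructor <;> [linarith [(hval g x).1, hμb.2]; linarith [(hval g x).2, hμb.1]]
    have hqc1 : ∑ g, p g * (val g x - μ) = 0 :=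
      cen_lemma p (fun g => val g x) μ hp1 hμdef
    have hqv1 : ∑ g, p g * (val g x - μ) ^ 2 ≤ M ^ 2 / 4 :=
      var_lemma p (fun g => val g x) M μ hM hp0 hp1 (fun g => hval g x) hμdef
    -- negated versions
    have hqb2 : ∀ g, |μ - val g x| ≤ M := fun g => by rw [abs_sub_comm]; exact hqb1 g
    have hqc2 : ∑ g, p g * (μ - val g x) = 0 := by
      have : ∑ g, p g * (μ - val g x) = -∑ g, p g * (val g x - μ) := by
        rw [← Finset.sum_neg_distrib]
        exact Finset.sum_congr rfl fun g _ => by ring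
      rw [this, hqc1, neg_zero]
    have hqv2 : ∑ g, p g * (μ - val g x) ^ 2 ≤ M ^ 2 / 4 := by
      have : ∑ g, p g * (μ - val g x) ^ 2 = ∑ g, p g * (val g x - μ) ^ 2 :=
        Finset.sum_congr rfl fun g _ => by ring
      rw [this]; exact hqv1
    have t1 := side (fun g => val g x - μ) hqb1 hqc1 hqv1
    have t2 := side (fun g => μ - val g x) hqb2 hqc2 hqv2
    have himp : ∀ v : Fin s → G, ε' < |μ - (∑ i, val (v i) x) / s| →
        ((s:ℝ) * ε' ≤ ∑ i, (val (v i) x - μ)) ∨ ((s:ℝ) * ε' ≤ ∑ i, (μ - val (v i) x)) := by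
      intro v hv'
      set S := ∑ i, val (v i) x with hS
      have habs : (s:ℝ) * ε' < |(s:ℝ) * μ - S| := by
        have heq2 : μ - S / s = ((s:ℝ) * μ - S) / s := by field_simp
        rw [heq2, abs_div, abs_of_pos hsRpos, lt_div_iff₀ hsRpos] at hv'
        linarith [hv']
      have hsum1 : ∑ i : Fin s, (val (v i) x - μ) = S - (s:ℝ) * μ := by
        rw [Finset.sum_sub_distrib, Finset.sum_const, Finset.card_univ, Fintype.card_fin,
          nsmul_eq_mul, hS]
      have hsum2 : ∑ i : Fin s, (μ - val (v i) x) = (s:ℝ) * μ - S := by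
        rw [Finset.sum_sub_distrib, Finset.sum_const, Finset.card_univ, Fintype.card_fin,
          nsmul_eq_mul, hS]
      rcases lt_abs.mp habs with h | h
      · right; rw [hsum2]; linarith
      · left; rw [hsum1]; linarith
    have hstep : ∑ v ∈ Finset.univ.filter
        (fun v : Fin s → G => ε' < |μ - (∑ i, val (v i) x) / s|), ∏ i, p (v i)
        ≤ (∑ v ∈ Finset.univ.filter
            (fun v : Fin s → G => (s : ℝ) * ε' ≤ ∑ i, (val (v i) x - μ)), ∏ i, p (v i))
          + ∑ v ∈ Finset.univ.filter
            (fun v : Fin s → G => (s : ℝ) * ε' ≤ ∑ i, (μ - val (v i) x)), ∏ i, p (v i) := by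
      rw [Finset.sum_filter, Finset.sum_filter, Finset.sum_filter, ← Finset.sum_add_distrib]
      apply Finset.sum_le_sum
      intro v _
      have hup0 : (0:ℝ) ≤ (if (s : ℝ) * ε' ≤ ∑ i, (val (v i) x - μ) then ∏ i, p (v i) else 0) := by
        split
        · exact hw v
        · exact le_refl 0
      have hlo0 : (0:ℝ) ≤ (if (s : ℝ) * ε' ≤ ∑ i, (μ - val (v i) x) then ∏ i, p (v i) else 0) := by
        split
        · exact hw v
        · exact le_refl 0
      by_cases hb : ε' < |μ - (∑ i, val (v i) x) / s|
      · rw [if_pos hb]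
        rcases himp v hb with h | h
        · rw [if_pos h]; linarith
        · rw [if_pos h]; linarith
      · rw [if_neg hb]; linarith
    have hfin : (1:ℝ) / (2 * n) + 1 / (2 * n) = 1 / n := by
      field_simp
      norm_num
    calc ∑ v ∈ Finset.univ.filter
          (fun v : Fin s → G => ε' < |μ - (∑ i, val (v i) x) / s|), ∏ i, p (v i)
        ≤ _ := hstep
      _ < 1 / (2 * (n:ℝ)) + 1 / (2 * (n:ℝ)) := add_lt_add t1 t2
      _ = 1 / (n:ℝ) := hfin
  -- combine via union bound
  by_contra hcon
  push_neg at hcon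
  have hw1 : ∑ v : Fin s → G, ∏ i, p (v i) = 1 := by
    rw [← Fintype.sum_pow, hp1, one_pow]
  have hub : (1:ℝ) ≤ ∑ x ∈ D, ∑ v ∈ Finset.univ.filter
      (fun v : Fin s → G => ε' < |(∑ g, p g * val g x) - (∑ i, val (v i) x) / s|),
      ∏ i, p (v i) := by
    calc (1:ℝ) = ∑ v : Fin s → G, ∏ i, p (v i) := hw1.symm
      _ ≤ ∑ v : Fin s → G, ∑ x ∈ D,
            (if ε' < |(∑ g, p g * val g x) - (∑ i, val (v i) x) / s|
              then ∏ i, p (v i) else 0) := by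
          apply Finset.sum_le_sum
          intro v _
          obtain ⟨x, hxD, hxb⟩ := hcon v
          have h2 : (if ε' < |(∑ g, p g * val g x) - (∑ i, val (v i) x) / s|
                then ∏ i, p (v i) else 0)
              ≤ ∑ y ∈ D, (if ε' < |(∑ g, p g * val g y) - (∑ i, val (v i) y) / s|
                then ∏ i, p (v i) else 0) := by
            apply Finset.single_le_sum (f := fun y =>
              if ε' < |(∑ g, p g * val g y) - (∑ i, val (v i) y) / s|
                then ∏ i, p (v i) else 0) _ hxD
            intro y _
            split
            · exact hw v
            · exact le_refl 0
          rw [if_pos hxb] at h2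
          exact h2
      _ = ∑ x ∈ D, ∑ v ∈ Finset.univ.filter
            (fun v : Fin s → G => ε' < |(∑ g, p g * val g x) - (∑ i, val (v i) x) / s|),
            ∏ i, p (v i) := by
          rw [Finset.sum_comm]
          exact Finset.sum_congr rfl fun x _ => (Finset.sum_filter _ _).symm
  have hlt : ∑ x ∈ D, ∑ v ∈ Finset.univ.filter
      (fun v : Fin s → G => ε' < |(∑ g, p g * val g x) - (∑ i, val (v i) x) / s|),
      ∏ i, p (v i) < ∑ x ∈ D, 1 / (n:ℝ) :=
    Finset.sum_lt_sum_of_nonempty hD perx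
  have hone : ∑ x ∈ D, (1:ℝ) / n = 1 := by
    rw [Finset.sum_const, nsmul_eq_mul, ← hn_def]
    field_simp
  linarith
end
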